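/- Let K ⊆ S ⊆ S² be a spherically convex body satisfying the angular monotonicity property. Then the spherical diameter of its Steiner symmetral does not exceed that of K: diam(σ_{L,H}(K)) ≤ diam(K), where diam(X) = sup{d_s(x,y) : x,y ∈ X}. -/

import Mathlib

open Real Set MeasureTheory Metric Filter
open scoped RealInnerProductSpace ENNReal Topology

noncomputable section

/-- Euclidean 3-space; the unit sphere `S²` is `Metric.sphere (0 : E3) 1`. -/
abbrev E3 : Type := EuclideanSpace ℝ (Fin 3)

/-- The spherical distance `d_s(x,y) = arccos ⟨x,y⟩`. -/
def sphDist (x y : E3) : ℝ := Real.arccos ⟪x, y⟫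

/-- The shorter great-circle arc (spherical segment) joining two non-antipodal
unit vectors: the radial projection of the Euclidean segment-cone. -/
def sphSeg (x y : E3) : Set E3 :=
  {z | ∃ a b : ℝ, 0 ≤ a ∧ 0 ≤ b ∧ a • x + b • y ≠ 0 ∧
      z = ‖a • x + b • y‖⁻¹ • (a • x + b • y)}

/-- A set is spherically convex if it consists of unit vectors, is contained in an
open hemisphere, and contains the shorter arc joining any two of its (non-antipodal)
points. -/
def SphConvex (K : Set E3) : Prop :=
  K ⊆ sphere (0 : E3) 1 ∧ (∃ e : E3, ‖e‖ = 1 ∧ ∀ x ∈ K, 0 < ⟪e, x⟫) ∧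
    ∀ x ∈ K, ∀ y ∈ K, x ≠ -y → sphSeg x y ⊆ K

/-- Relative interior of a subset of the sphere (interior within the sphere). -/
def relInt (K : Set E3) : Set E3 :=
  {x | ∃ ε : ℝ, 0 < ε ∧ sphere (0 : E3) 1 ∩ ball x ε ⊆ K}

/-- A spherical convex body: compact, spherically convex, with nonempty
(relative) interior. -/
def SphBody (K : Set E3) : Prop :=
  IsCompact K ∧ SphConvex K ∧ (K ∩ relInt K).Nonempty

/-- Relative boundary of a subset of the sphere. -/
def relFrontier (K : Set E3) : Set E3 := K \ relInt K

/-- Perimeter: 1-dimensional Hausdorff measure of the (relative) boundary. -/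
def sphPerim (K : Set E3) : ℝ≥0∞ := μH[1] (relFrontier K)

/-- Spherical diameter: supremum of pairwise spherical distances. -/
def sphDiam (X : Set E3) : ℝ := sSup {d | ∃ x ∈ X, ∃ y ∈ X, d = sphDist x y}

/-- The point of `S²` with latitude `θ` (signed distance from the great circle `L`
in the `(x,y)`-plane) and longitude `φ` (signed distance along a distance curve from
the half great circle `H` in the `(x,z)`-plane). -/
def sphPt (θ φ : ℝ) : E3 :=
  (WithLp.equiv 2 (Fin 3 → ℝ)).symm
    ![Real.cos θ * Real.cos φ, Real.cos θ * Real.sin φ, Real.sin θ]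

/-- The center `c = (1,0,0)` of the fixed open hemisphere `S`. -/
def ce : E3 := sphPt 0 0

/-- The fixed open hemisphere `S` centered at `c = (1,0,0)`. -/
def hemi : Set E3 := {p ∈ sphere (0 : E3) 1 | 0 < p 0}

/-- The distance curve `C_θ ⊆ S` with axis `L` at signed spherical distance `θ`
from `L`; `C_0 = L`. -/
def distCurve (θ : ℝ) : Set E3 := {p | ∃ φ ∈ Ioo (-(π/2)) (π/2), p = sphPt θ φ}

/-- The set of longitudes `φ` at which the distance curve `C_θ` meets `K`. -/
def sliceSet (K : Set E3) (θ : ℝ) : Set ℝ :=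
  {φ | φ ∈ Ioo (-(π/2)) (π/2) ∧ sphPt θ φ ∈ K}

/-- The spherical Steiner symmetral `σ_{L,H}(K)` with respect to the standard pair
`(L,H)`: on each distance curve `C_θ` meeting `K`, the arc `K ∩ C_θ` is replaced by
the closed subarc of `C_θ` of the same (angular) length centered at `C_θ ∩ H`
(the point of longitude `0`). -/
def steiner (K : Set E3) : Set E3 :=
  {p | ∃ θ ∈ Ioo (-(π/2)) (π/2), ∃ φ : ℝ, p = sphPt θ φ ∧ (sliceSet K θ).Nonempty ∧
      |φ| ≤ (sSup (sliceSet K θ) - sInf (sliceSet K θ)) / 2}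

/-- The connectedness property: `K ∩ C` is connected (possibly empty or a point)
for every distance curve `C` with axis `L`. -/
def ConnProp (K : Set E3) : Prop := ∀ θ : ℝ, IsPreconnected (K ∩ distCurve θ)

/-- Angular length of the arc `K ∩ C_θ` (zero if the arc is empty or a point). -/
def angLen (K : Set E3) (θ : ℝ) : ℝ := sSup (sliceSet K θ) - sInf (sliceSet K θ)

/-- The monotonicity part of the angular monotonicity property: the angular length
of `K ∩ C_θ` is nonincreasing for `θ ≥ 0` and nondecreasing for `θ ≤ 0`. -/
def AngMonoLen (K : Set E3) : Prop :=
  (∀ θ₁ θ₂ : ℝ, 0 ≤ θ₁ → θ₁ ≤ θ₂ → angLen K θ₂ ≤ angLen K θ₁) ∧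
  (∀ θ₁ θ₂ : ℝ, θ₁ ≤ θ₂ → θ₂ ≤ 0 → angLen K θ₁ ≤ angLen K θ₂)

/-- The angular monotonicity property (including the connectedness of all the
arcs `K ∩ C_θ`). -/
def AngMono (K : Set E3) : Prop := ConnProp K ∧ AngMonoLen K

/-- `K` is symmetric with respect to the spherical point reflection in `c`. -/
def cSymm (K : Set E3) : Prop := ∀ x ∈ K, (2 * ⟪x, ce⟫) • ce - x ∈ K

/-- The closed spherical cap (ball) of radius `r` centered at `x`. -/
def cap (x : E3) (r : ℝ) : Set E3 := {y ∈ sphere (0 : E3) 1 | sphDist x y ≤ r}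

/-- Rotation of `S²` around the axis through `c = (1,0,0)` by angle `α`. -/
def rotc (α : ℝ) (p : E3) : E3 :=
  (WithLp.equiv 2 (Fin 3 → ℝ)).symm
    ![p 0, Real.cos α * p 1 - Real.sin α * p 2, Real.sin α * p 1 + Real.cos α * p 2]

/-- The Steiner symmetrization `σ_{L',H'}` with `L' ∩ H' = {c}`, where `(L',H')`
is the standard pair `(L,H)` rotated around `c` by angle `α`. -/
def steinerAt (α : ℝ) (K : Set E3) : Set E3 := rotc α '' steiner (rotc (-α) '' K)

/-- The general Steiner symmetrization on `S²` with respect to the frame obtained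
from the standard one by the orthogonal map `g`. -/
def steinerG (g : E3 ≃ₗᵢ[ℝ] E3) (K : Set E3) : Set E3 := ⇑g '' steiner (⇑g.symm '' K)

/-- The result of applying a finite sequence of Steiner symmetrizations to `K`. -/
def steinerSeq : Set E3 → List (E3 ≃ₗᵢ[ℝ] E3) → Set E3
  | K, [] => K
  | K, g :: gs => steinerSeq (steinerG g K) gs

/-- A finite sequence of Steiner symmetrizations is applicable to `K`: at each step
the current set lies in the open hemisphere centered at the intersection point of the
current axes and satisfies the angular monotonicity property with respect to the
current symmetrization. -/
def Applicable : Set E3 → List (E3 ≃ₗᵢ[ℝ] E3) → Prop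
  | _, [] => True
  | K, g :: gs => (⇑g.symm '' K ⊆ hemi ∧ AngMono (⇑g.symm '' K)) ∧ Applicable (steinerG g K) gs

/-- The spherical convex hull: intersection of all spherically convex sets
containing the given set. -/
def sphConvexHull (A : Set E3) : Set E3 := ⋂₀ {C | SphConvex C ∧ A ⊆ C}

/-- `P` is a spherically convex polygon with at most `N` vertices: the spherical
convex hull of at most `N` unit vectors contained in an open hemisphere. -/
def IsPolyN (N : ℕ) (P : Set E3) : Prop :=
  ∃ V : Finset E3, V.card ≤ N ∧ (V : Set E3) ⊆ sphere (0 : E3) 1 ∧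
    (∃ e : E3, ‖e‖ = 1 ∧ ∀ v ∈ V, 0 < ⟪e, v⟫) ∧ P = sphConvexHull (V : Set E3)

/-- `A_N(X)`: supremum of the areas of spherically convex polygons with at most `N`
vertices contained in `X`. -/
def AN (N : ℕ) (X : Set E3) : ℝ≥0∞ :=
  ⨆ (P : Set E3) (_ : IsPolyN N P ∧ P ⊆ X), μH[2] P

/-- First moment (vector-valued integral) of a subset of the sphere. -/
def sphMoment (A : Set E3) : E3 := ∫ u in A, u ∂μH[2]

/-- The spherical centroid `g_s(A)`: the normalized first moment. -/
def sphCentroid (A : Set E3) : E3 := ‖sphMoment A‖⁻¹ • sphMoment A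

/-!
The symmetral's arc on a distance curve `C_θ` is centred at longitude `0` and has the same
angular length `b - a` as the arc of `K`, whose end longitudes `a ≤ b` are attained in `K`
because `K` is closed. For points of the symmetral on `C_θ₁` and `C_θ₂` the longitude
difference is at most `((b₁ - a₁) + (b₂ - a₂)) / 2`, the mean of the two cross differences
`b₁ - a₂` and `b₂ - a₁`, so it is at most one of them. Since the spherical distance between
points of `C_θ₁` and `C_θ₂` increases with their longitude difference on `[0, π]`, the pair of
endpoints realising that cross difference is at least as far apart in `K`.
-/

lemma inner_sphPt (θ₁ φ₁ θ₂ φ₂ : ℝ) :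
    ⟪sphPt θ₁ φ₁, sphPt θ₂ φ₂⟫ = sin θ₁ * sin θ₂ + cos θ₁ * cos θ₂ * cos (φ₁ - φ₂) := by
  simp only [sphPt, PiLp.inner_apply, WithLp.equiv_symm_apply, RCLike.inner_apply,
    starRingEnd_apply, star_trivial, Fin.sum_univ_three]
  simp [Real.cos_sub]
  ring

lemma continuous_sphPt (θ : ℝ) : Continuous (sphPt θ) := by
  refine (PiLp.continuous_toLp 2 (fun _ : Fin 3 => ℝ)).comp (continuous_pi fun i => ?_)
  fin_cases i <;> simp <;> fun_prop

lemma sphDist_sphPt_le_of_abs_sub_le {θ₁ θ₂ φ₁ φ₂ ψ₁ ψ₂ : ℝ} (h₁ : 0 ≤ cos θ₁) (h₂ : 0 ≤ cos θ₂)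
    (h : |φ₁ - φ₂| ≤ |ψ₁ - ψ₂|) (hπ : |ψ₁ - ψ₂| ≤ π) :
    sphDist (sphPt θ₁ φ₁) (sphPt θ₂ φ₂) ≤ sphDist (sphPt θ₁ ψ₁) (sphPt θ₂ ψ₂) := by
  have hcos : cos (ψ₁ - ψ₂) ≤ cos (φ₁ - φ₂) := by
    rw [← cos_abs (ψ₁ - ψ₂), ← cos_abs (φ₁ - φ₂)]
    exact cos_le_cos_of_nonneg_of_le_pi (abs_nonneg _) hπ h
  unfold sphDist
  rw [inner_sphPt, inner_sphPt]
  gcongr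

lemma sphDist_le_sphDiam {X : Set E3} {x y : E3} (hx : x ∈ X) (hy : y ∈ X) :
    sphDist x y ≤ sphDiam X :=
  le_csSup ⟨π, by rintro _ ⟨_, -, _, -, rfl⟩; exact arccos_le_pi _⟩ ⟨x, hx, y, hy, rfl⟩

lemma sphDiam_nonneg (X : Set E3) : 0 ≤ sphDiam X :=
  Real.sSup_nonneg <| by rintro _ ⟨_, -, _, -, rfl⟩; exact arccos_nonneg _

lemma IsClosed.sphPt_mem_of_mem_closure_sliceSet {K : Set E3} (hK : IsClosed K) {θ φ : ℝ}
    (hφ : φ ∈ closure (sliceSet K θ)) : sphPt θ φ ∈ K :=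
  closure_minimal (fun _ h => h.2) (hK.preimage (continuous_sphPt θ)) hφ

lemma IsClosed.exists_of_mem_steiner {K : Set E3} (hK : IsClosed K) {p : E3}
    (hp : p ∈ steiner K) :
    ∃ θ φ a b : ℝ, p = sphPt θ φ ∧ 0 ≤ cos θ ∧ -(π / 2) ≤ a ∧ b ≤ π / 2 ∧
      sphPt θ a ∈ K ∧ sphPt θ b ∈ K ∧ |φ| ≤ (b - a) / 2 := by
  obtain ⟨θ, hθ, φ, rfl, hne, hφ⟩ := hp
  have hsub : sliceSet K θ ⊆ Ioo (-(π / 2)) (π / 2) := fun _ h => h.1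
  have hbdd : BddAbove (sliceSet K θ) := ⟨π / 2, fun _ h => (hsub h).2.le⟩
  have hbdd' : BddBelow (sliceSet K θ) := ⟨-(π / 2), fun _ h => (hsub h).1.le⟩
  exact ⟨θ, φ, _, _, rfl, cos_nonneg_of_neg_pi_div_two_le_of_le hθ.1.le hθ.2.le,
    le_csInf hne fun _ h => (hsub h).1.le, csSup_le hne fun _ h => (hsub h).2.le,
    hK.sphPt_mem_of_mem_closure_sliceSet (csInf_mem_closure hne hbdd'),
    hK.sphPt_mem_of_mem_closure_sliceSet (csSup_mem_closure hne hbdd), hφ⟩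

lemma abs_sub_le_or_abs_sub_le_of_abs_le_half {φ₁ φ₂ a₁ b₁ a₂ b₂ : ℝ}
    (h₁ : |φ₁| ≤ (b₁ - a₁) / 2) (h₂ : |φ₂| ≤ (b₂ - a₂) / 2) :
    |φ₁ - φ₂| ≤ b₁ - a₂ ∨ |φ₁ - φ₂| ≤ b₂ - a₁ := by
  have := abs_sub φ₁ φ₂
  by_contra! h
  linarith [h.1, h.2]

lemma IsClosed.exists_sphDist_steiner_le {K : Set E3} (hK : IsClosed K) {p q : E3}
    (hp : p ∈ steiner K) (hq : q ∈ steiner K) :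
    ∃ x ∈ K, ∃ y ∈ K, sphDist p q ≤ sphDist x y := by
  obtain ⟨θ₁, φ₁, a₁, b₁, rfl, hc₁, ha₁, hb₁, hKa₁, hKb₁, hφ₁⟩ := hK.exists_of_mem_steiner hp
  obtain ⟨θ₂, φ₂, a₂, b₂, rfl, hc₂, ha₂, hb₂, hKa₂, hKb₂, hφ₂⟩ := hK.exists_of_mem_steiner hq
  rcases abs_sub_le_or_abs_sub_le_of_abs_le_half hφ₁ hφ₂ with h | h
  · refine ⟨_, hKb₁, _, hKa₂, sphDist_sphPt_le_of_abs_sub_le hc₁ hc₂ ?_ ?_⟩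
    · exact h.trans (le_abs_self _)
    · exact abs_le.mpr ⟨by linarith [abs_nonneg (φ₁ - φ₂)], by linarith⟩
  · refine ⟨_, hKa₁, _, hKb₂, sphDist_sphPt_le_of_abs_sub_le hc₁ hc₂ ?_ ?_⟩
    · exact h.trans (abs_sub_comm b₂ a₁ ▸ le_abs_self _)
    · exact abs_le.mpr ⟨by linarith, by linarith [abs_nonneg (φ₁ - φ₂)]⟩

theorem steiner_diameter_le_general (K : Set E3) (hK : SphBody K) :
    sphDiam (steiner K) ≤ sphDiam K := by
  refine Real.sSup_le ?_ (sphDiam_nonneg K)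
  rintro _ ⟨p, hp, q, hq, rfl⟩
  obtain ⟨x, hx, y, hy, hpq⟩ := hK.1.isClosed.exists_sphDist_steiner_le hp hq
  exact hpq.trans (sphDist_le_sphDiam hx hy)

/-- Steiner symmetrization does not increase the spherical diameter
of a spherical convex body `K ⊆ S ⊆ S²` satisfying the angular monotonicity
property. -/
theorem steiner_diameter_le (K : Set E3) (hK : SphBody K) (hKS : K ⊆ hemi)
    (hmono : AngMono K) :
    sphDiam (steiner K) ≤ sphDiam K :=
  steiner_diameter_le_general K hK
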